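/- arXiv:2510.24426 — 2 statements merged into one kernel-verified Lean document; each statement's English description precedes it below -/
import Mathlib

section
/- Let {S_i}_{i∈I} be a family of connected sublocales of a frame L whose join exists as a sublocale. If there exists i₀ ∈ I such that closure(S_i) meets S_{i₀} for every i (or dually S_i meets closure(S_{i₀}) for every i), then ⋁_{i} S_i is connected. -/
open Order Set

variable {L : Type*} [Order.Frame L]

/-- A sublocale of a frame: closed under arbitrary meets and under Heyting implication
from arbitrary elements. -/
def IsSublocale (S : Set L) : Prop :=
  (∀ M ⊆ S, sInf M ∈ S) ∧ ∀ x : L, ∀ s ∈ S, x ⇨ s ∈ S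

/-- The open sublocale associated to `u`. -/
def oSub (u : L) : Set L := {x | u ⇨ x = x}

/-- The closed sublocale associated to `u`. -/
def cSub (u : L) : Set L := Set.Ici u

/-- Binary join of sublocales. -/
def vee (A B : Set L) : Set L := {x | ∃ M ⊆ A ∪ B, x = sInf M}

/-- Join of a family of sublocales. -/
def iJoin {ι : Type*} (S : ι → Set L) : Set L := {x | ∃ M ⊆ ⋃ i, S i, x = sInf M}

/-- Two sublocales meet if their intersection is not the void sublocale `{⊤}`. -/
def Meets (S T : Set L) : Prop := S ∩ T ≠ ({⊤} : Set L)

/-- The closure of a sublocale. -/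
def clo (S : Set L) : Set L := Set.Ici (sInf S)

/-- The index of the interior: the largest `u` with `oSub u ⊆ S`. -/
def intIdx (S : Set L) : L := sSup {u | oSub u ⊆ S}

/-- The interior of a sublocale: the largest open sublocale contained in it. -/
def intr (S : Set L) : Set L := oSub (intIdx S)

/-- The boundary of a sublocale: closure minus interior
(computed as `clo S ∩ cSub (intIdx S)`, since `cSub (intIdx S)` is the complement of
the interior). -/
def bd (S : Set L) : Set L := clo S ∩ cSub (intIdx S)

/-- The supplement of a sublocale. -/
def suppl (S : Set L) : Set L := ⋂₀ {T | IsSublocale T ∧ vee T S = Set.univ}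

/-- A sublocale is complemented if it is disjoint from its supplement. -/
def ComplementedSub (S : Set L) : Prop := S ∩ suppl S = ({⊤} : Set L)

/-- A sublocale is connected if it admits no separation by two closed sublocales. -/
def SubConnected (S : Set L) : Prop :=
  ∀ a b : L, S ⊆ vee (cSub a) (cSub b) → S ∩ cSub a ∩ cSub b = ({⊤} : Set L) →
    S ∩ cSub a = ({⊤} : Set L) ∨ S ∩ cSub b = ({⊤} : Set L)

/-- Separated sublocales. -/
def SepSub (P Q : Set L) : Prop :=
  clo P ∩ Q = ({⊤} : Set L) ∧ P ∩ clo Q = ({⊤} : Set L)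

/-- A connected element of a frame. -/
def ConnElem (v : L) : Prop := ∀ b c : L, v = b ⊔ c → b ⊓ c = ⊥ → b = ⊥ ∨ c = ⊥

/-- A locally connected frame: every element is a join of connected elements. -/
def LocConn (L : Type*) [Order.Frame L] : Prop :=
  ∀ x : L, ∃ F : Set L, (∀ v ∈ F, ConnElem v) ∧ x = sSup F

/-- A strongly locally connected frame. -/
def StrLocConn (L : Type*) [Order.Frame L] : Prop :=
  ∀ u : L, ∀ x ∈ oSub u, ∃ v : L, SubConnected (oSub v) ∧ oSub v ⊆ oSub u ∧ x ∈ oSub v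

/-- A component of a sublocale `T`: a nonvoid connected sublocale, maximal among
connected sublocales of `T`. -/
def IsComponent (D T : Set L) : Prop :=
  IsSublocale D ∧ D ⊆ T ∧ D ≠ ({⊤} : Set L) ∧ SubConnected D ∧
    ∀ S : Set L, IsSublocale S → S ⊆ T → SubConnected S → Meets S D → S ⊆ D

/-- Normally separated sublocales. -/
def NormSep (S T : Set L) : Prop :=
  ∃ u v : L, oSub u ∩ oSub v = ({⊤} : Set L) ∧ S ⊆ oSub u ∧ T ⊆ oSub v

/-- Normally connected sublocale. -/
def NormConn (C : Set L) : Prop :=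
  ∀ S T : Set L, IsSublocale S → IsSublocale T → vee S T = C → NormSep S T →
    S = ({⊤} : Set L) ∨ T = ({⊤} : Set L)

/-- A simple sublocale: complemented with both itself and its supplement connected. -/
def SimpleSub (S : Set L) : Prop :=
  IsSublocale S ∧ ComplementedSub S ∧ SubConnected S ∧ SubConnected (suppl S)


/-!
A separation of the join by closed sublocales `cSub a`, `cSub b` restricts to a separation of
each `S i`; by connectedness `S i` misses one side, and closure of `S i` under `b ⇨ -` then
puts `S i` entirely inside the other closed sublocale. Closures of pieces inside `cSub a` stay
inside `cSub a`, so the meeting hypothesis forces every `S i` onto the side of `S i₀`, and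
the other side of the join is void.
-/

lemma IsSublocale.top_mem {S : Set L} (hS : IsSublocale S) : (⊤ : L) ∈ S := by
  simpa using hS.1 ∅ (empty_subset _)

lemma top_mem_iJoin {ι : Type*} (S : ι → Set L) : (⊤ : L) ∈ iJoin S :=
  ⟨∅, empty_subset _, sInf_empty.symm⟩

lemma top_mem_clo (S : Set L) : (⊤ : L) ∈ clo S := le_top

lemma subset_iJoin {ι : Type*} (S : ι → Set L) (i : ι) : S i ⊆ iJoin S := fun x hx =>
  ⟨{x}, singleton_subset_iff.mpr (mem_iUnion.mpr ⟨i, hx⟩), sInf_singleton.symm⟩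

lemma iJoin_subset_cSub {ι : Type*} {S : ι → Set L} {b : L} (h : ∀ i, S i ⊆ cSub b) :
    iJoin S ⊆ cSub b := by
  rintro x ⟨M, hM, rfl⟩
  refine le_sInf fun m hm => ?_
  obtain ⟨i, hmi⟩ := mem_iUnion.mp (hM hm)
  exact h i hmi

lemma vee_cSub_subset_cSub_inf (a b : L) : vee (cSub a) (cSub b) ⊆ cSub (a ⊓ b) := by
  rintro x ⟨M, hM, rfl⟩
  refine le_sInf fun m hm => ?_
  rcases hM hm with h | h
  · exact inf_le_left.trans h
  · exact inf_le_right.trans h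

lemma clo_subset_cSub {S : Set L} {a : L} (h : S ⊆ cSub a) : clo S ⊆ cSub a :=
  fun _ hx => (le_sInf fun _ hs => h hs).trans hx

lemma eq_singleton_top_of_subset {X Y : Set L} (hXY : X ⊆ Y) (hY : Y = {⊤})
    (hX : (⊤ : L) ∈ X) : X = {⊤} :=
  (hXY.trans hY.subset).antisymm (singleton_subset_iff.mpr hX)

lemma inter_cSub_eq_singleton_top {T : Set L} {a b : L} (hT : (⊤ : L) ∈ T) (hTb : T ⊆ cSub b)
    (hsep : T ∩ cSub a ∩ cSub b = {⊤}) : T ∩ cSub a = {⊤} :=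
  eq_singleton_top_of_subset (Y := T ∩ cSub a ∩ cSub b) (fun _ hx => ⟨hx, hTb hx.1⟩) hsep
    ⟨hT, le_top⟩

lemma not_meets_of_subset_cSub {X Y J : Set L} {a b : L} (hsep : J ∩ cSub a ∩ cSub b = {⊤})
    (hXY : X ∩ Y ⊆ J) (hX : X ⊆ cSub a) (hY : Y ⊆ cSub b) (hXtop : (⊤ : L) ∈ X)
    (hYtop : (⊤ : L) ∈ Y) : ¬ Meets X Y := fun hmeets =>
  hmeets <| eq_singleton_top_of_subset (Y := J ∩ cSub a ∩ cSub b)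
    (fun _ hx => ⟨⟨hXY hx, hX hx.1⟩, hY hx.2⟩) hsep ⟨hXtop, hYtop⟩

/-- If `x ∈ S` then `b ⇨ x ∈ S` lies above `a`, so it is `⊤` when `S ∩ cSub a` is void. -/
lemma IsSublocale.subset_cSub_of_inter_cSub_eq {S : Set L} (hS : IsSublocale S) {a b : L}
    (hab : S ⊆ cSub (a ⊓ b)) (ha : S ∩ cSub a = {⊤}) : S ⊆ cSub b := by
  intro x hx
  have hmem : b ⇨ x ∈ S ∩ cSub a := ⟨hS.2 b x hx, le_himp_iff.mpr (hab hx)⟩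
  rw [ha, mem_singleton_iff, himp_eq_top_iff] at hmem
  exact hmem

lemma SubConnected.subset_cSub_or_subset_cSub {S : Set L} (hc : SubConnected S)
    (hS : IsSublocale S) {a b : L} (hcov : S ⊆ vee (cSub a) (cSub b))
    (hsep : S ∩ cSub a ∩ cSub b = {⊤}) : S ⊆ cSub a ∨ S ⊆ cSub b := by
  have hab : S ⊆ cSub (a ⊓ b) := hcov.trans (vee_cSub_subset_cSub_inf a b)
  rcases hc a b hcov hsep with ha | hb
  · exact Or.inr (hS.subset_cSub_of_inter_cSub_eq hab ha)
  · exact Or.inl (hS.subset_cSub_of_inter_cSub_eq (inf_comm a b ▸ hab) hb)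

lemma forall_subset_cSub_of_meets {ι : Type*} {S : ι → Set L} (hS : ∀ i, IsSublocale (S i))
    {a b : L} (hsep : iJoin S ∩ cSub a ∩ cSub b = {⊤})
    (hside : ∀ i, S i ⊆ cSub a ∨ S i ⊆ cSub b) {i₀ : ι} (h₀ : S i₀ ⊆ cSub b)
    (h : (∀ i, Meets (clo (S i)) (S i₀)) ∨ (∀ i, Meets (S i) (clo (S i₀)))) :
    ∀ i, S i ⊆ cSub b := by
  intro i
  refine (hside i).resolve_left fun hi => ?_
  rcases h with hm | hm
  · exact not_meets_of_subset_cSub hsep (inter_subset_right.trans (subset_iJoin S i₀))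
      (clo_subset_cSub hi) h₀ (top_mem_clo _) (hS i₀).top_mem (hm i)
  · exact not_meets_of_subset_cSub hsep (inter_subset_left.trans (subset_iJoin S i))
      hi (clo_subset_cSub h₀) (hS i).top_mem (top_mem_clo _) (hm i)

theorem stmt12_general {ι : Type*} (S : ι → Set L) (hS : ∀ i, IsSublocale (S i))
    (hconn : ∀ i, SubConnected (S i))
    (i₀ : ι)
    (h : (∀ i, Meets (clo (S i)) (S i₀)) ∨ (∀ i, Meets (S i) (clo (S i₀)))) :
    SubConnected (iJoin S) := by
  intro a b hcov hsep
  have hside : ∀ i, S i ⊆ cSub a ∨ S i ⊆ cSub b := fun i =>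
    (hconn i).subset_cSub_or_subset_cSub (hS i) ((subset_iJoin S i).trans hcov)
      (eq_singleton_top_of_subset (by gcongr; exact subset_iJoin S i) hsep
        ⟨⟨(hS i).top_mem, le_top⟩, le_top⟩)
  rcases hside i₀ with h₀ | h₀
  · have hsep' : iJoin S ∩ cSub b ∩ cSub a = {⊤} := by rwa [inter_right_comm]
    have hall := forall_subset_cSub_of_meets hS hsep' (fun i => (hside i).symm) h₀ h
    exact Or.inr (inter_cSub_eq_singleton_top (top_mem_iJoin S) (iJoin_subset_cSub hall) hsep')
  · have hall := forall_subset_cSub_of_meets hS hsep hside h₀ h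
    exact Or.inl (inter_cSub_eq_singleton_top (top_mem_iJoin S) (iJoin_subset_cSub hall) hsep)

theorem stmt12 {ι : Type*} (S : ι → Set L) (hS : ∀ i, IsSublocale (S i))
    (hconn : ∀ i, SubConnected (S i)) (hJ : IsSublocale (iJoin S))
    (i₀ : ι)
    (h : (∀ i, Meets (clo (S i)) (S i₀)) ∨ (∀ i, Meets (S i) (clo (S i₀)))) :
    SubConnected (iJoin S) :=
  stmt12_general S hS hconn i₀ h
end

section
/- Let L be a connected and locally connected frame, and let 𝔬(v) be a component of an open sublocale 𝔬(u) with 𝔬(v) ≠ L. Then the boundary ∂𝔬(v) is nonvoid and ∂𝔬(v) ⊆ 𝔠(u) = L∖𝔬(u). Moreover ∂𝔬(v) = 𝔠(v ∨ v*), where v* is the pseudocomplement of v. -/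
open Order Set

variable {L : Type*} [Order.Frame L]

lemma himp_mem_oSub (w x : L) : w ⇨ x ∈ oSub w := by
  show w ⇨ (w ⇨ x) = w ⇨ x
  rw [himp_himp, inf_idem]

lemma oSub_subset_iff {u v : L} : oSub u ⊆ oSub v ↔ u ≤ v := by
  constructor
  · intro h
    have h1 := h (himp_mem_oSub u (u ⊓ v))
    have h2 : v ⇨ (u ⇨ (u ⊓ v)) = ⊤ := by
      rw [himp_himp]
      exact himp_eq_top_iff.mpr (le_inf inf_le_right inf_le_left)
    have h3 : u ⇨ (u ⊓ v) = ⊤ := by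
      have := h1.symm
      rwa [h2] at this
    exact (himp_eq_top_iff.mp h3).trans inf_le_right
  · intro h x hx
    show v ⇨ x = x
    have hx' : u ⇨ x = x := hx
    refine le_antisymm ?_ le_himp
    calc v ⇨ x ≤ u ⇨ x := himp_le_himp_right h
      _ = x := hx'

lemma sInf_oSub (v : L) : sInf (oSub v) = vᶜ := by
  apply le_antisymm
  · apply sInf_le
    rw [← himp_bot]
    exact himp_mem_oSub v ⊥
  · apply le_sInf
    intro x hx
    have hx' : v ⇨ x = x := hx
    calc vᶜ = v ⇨ ⊥ := (himp_bot v).symm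
      _ ≤ v ⇨ x := himp_le_himp_left bot_le
      _ = x := hx'

lemma vee_cSub (a b : L) : vee (cSub a) (cSub b) = cSub (a ⊓ b) := by
  ext x
  constructor
  · rintro ⟨M, hM, rfl⟩
    refine le_sInf fun m hm => ?_
    rcases hM hm with h | h
    · exact inf_le_left.trans h
    · exact inf_le_right.trans h
  · intro hx
    refine ⟨{x ⊔ a, x ⊔ b}, ?_, ?_⟩
    · rintro m (rfl | rfl)
      · exact Or.inl le_sup_right
      · exact Or.inr le_sup_right
    · rw [sInf_pair, ← sup_inf_left, sup_eq_left.mpr hx]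

lemma inter_cSub_eq {w a : L} : oSub w ∩ cSub a = ({⊤} : Set L) ↔ w ≤ a := by
  constructor
  · intro h
    have hmem : w ⇨ a ∈ oSub w ∩ cSub a := ⟨himp_mem_oSub w a, le_himp⟩
    rw [h] at hmem
    exact himp_eq_top_iff.mp hmem
  · intro h
    ext x
    simp only [Set.mem_inter_iff, Set.mem_singleton_iff]
    constructor
    · rintro ⟨hx, hax⟩
      have hx' : w ⇨ x = x := hx
      have : w ⇨ x = ⊤ := himp_eq_top_iff.mpr (h.trans hax)
      rw [hx'] at this; exact this
    · rintro rfl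
      exact ⟨himp_top, le_top⟩

lemma subConnected_oSub {w : L} (hw : ConnElem w) : SubConnected (oSub w) := by
  intro a b hsub hvoid
  rw [vee_cSub] at hsub
  have h1 : a ⊓ b ⊓ w = ⊥ := by
    have hm : w ⇨ ⊥ ∈ oSub w := himp_mem_oSub w ⊥
    have := hsub hm
    have hle : a ⊓ b ≤ w ⇨ ⊥ := this
    exact le_bot_iff.mp (le_himp_iff.mp hle)
  have h2 : w ≤ a ⊔ b := by
    have : oSub w ∩ cSub (a ⊔ b) = ({⊤} : Set L) := by
      have hIci : cSub a ∩ cSub b = cSub (a ⊔ b) := Set.Ici_inter_Ici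
      rw [← hvoid, Set.inter_assoc, hIci]
    exact inter_cSub_eq.mp this
  have hsplit : w = (w ⊓ a) ⊔ (w ⊓ b) := by
    rw [← inf_sup_left, inf_eq_left.mpr h2]
  have hdisj : (w ⊓ a) ⊓ (w ⊓ b) = ⊥ := by
    refine le_bot_iff.mp ?_
    calc (w ⊓ a) ⊓ (w ⊓ b) ≤ a ⊓ b ⊓ w :=
          le_inf (le_inf (inf_le_left.trans inf_le_right)
            (inf_le_right.trans inf_le_right)) (inf_le_left.trans inf_le_left)
      _ = ⊥ := h1
  rcases hw (w ⊓ a) (w ⊓ b) hsplit hdisj with h | h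
  · right
    apply inter_cSub_eq.mpr
    have hw' : w = ⊥ ⊔ w ⊓ b := by rw [← h]; exact hsplit
    rw [bot_sup_eq] at hw'
    exact hw'.trans_le inf_le_right
  · left
    apply inter_cSub_eq.mpr
    have hw' : w = w ⊓ a ⊔ ⊥ := by rw [← h]; exact hsplit
    rw [sup_bot_eq] at hw'
    exact hw'.trans_le inf_le_right

lemma meets_oSub {w v : L} (h : w ⊓ v ≠ ⊥) : Meets (oSub w) (oSub v) := by
  intro hcon
  have hmem : (w ⊓ v) ⇨ ⊥ ∈ oSub w ∩ oSub v := by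
    constructor
    · show w ⇨ ((w ⊓ v) ⇨ ⊥) = (w ⊓ v) ⇨ ⊥
      rw [himp_himp, inf_left_idem]
    · show v ⇨ ((w ⊓ v) ⇨ ⊥) = (w ⊓ v) ⇨ ⊥
      rw [himp_himp]
      congr 1
      rw [inf_comm w v, inf_left_idem, inf_comm]
  rw [hcon] at hmem
  exact h (le_bot_iff.mp (himp_eq_top_iff.mp hmem))

lemma isSublocale_oSub (w : L) : IsSublocale (oSub w) := by
  constructor
  · intro M hM
    show w ⇨ sInf M = sInf M
    refine le_antisymm (le_sInf fun x hx => ?_) le_himp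
    have hx' : w ⇨ x = x := hM hx
    calc w ⇨ sInf M ≤ w ⇨ x := himp_le_himp_left (sInf_le hx)
      _ = x := hx'
  · intro x s hs
    show w ⇨ (x ⇨ s) = x ⇨ s
    have hs' : w ⇨ s = s := hs
    rw [himp_himp, inf_comm, ← himp_himp, hs']

lemma intIdx_oSub (v : L) : intIdx (oSub v) = v := by
  have : {u : L | oSub u ⊆ oSub v} = Set.Iic v := by
    ext u; exact oSub_subset_iff
  rw [intIdx, this]
  exact le_antisymm (sSup_le fun u hu => hu) (le_sSup (Set.mem_Iic.mpr le_rfl))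

lemma bd_oSub (v : L) : bd (oSub v) = Set.Ici (v ⊔ vᶜ) := by
  rw [bd, clo, sInf_oSub, intIdx_oSub, cSub, Set.Ici_inter_Ici, sup_comm]

theorem stmt14 (hc : ConnElem (⊤ : L)) (hlc : LocConn L) (u v : L)
    (hcomp : IsComponent (oSub v) (oSub u)) (hne : oSub v ≠ (Set.univ : Set L)) :
    bd (oSub v) ≠ ({⊤} : Set L) ∧ bd (oSub v) ⊆ cSub u ∧ bd (oSub v) = cSub (v ⊔ vᶜ) := by
  refine ⟨?_, ?_, bd_oSub v⟩
  · rw [bd_oSub]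
    intro heq
    have htop : v ⊔ vᶜ = ⊤ := by
      have : v ⊔ vᶜ ∈ ({⊤} : Set L) := heq ▸ Set.self_mem_Ici
      exact this
    rcases hc v vᶜ htop.symm (inf_compl_self v) with h | h
    · apply hcomp.2.2.1
      subst h
      ext x
      simp only [Set.mem_singleton_iff]
      show ⊥ ⇨ x = x ↔ x = ⊤
      rw [bot_himp]
      exact eq_comm
    · have hv : v = ⊤ := by rw [h, sup_bot_eq] at htop; exact htop
      apply hne
      subst hv
      ext x
      simp only [Set.mem_univ, iff_true]
      exact top_himp
  · rw [bd_oSub, cSub]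
    apply Set.Ici_subset_Ici.mpr
    obtain ⟨F, hF, hu⟩ := hlc u
    rw [hu]
    apply sSup_le
    intro w hwF
    by_cases h : w ⊓ v = ⊥
    · exact (le_compl_iff_disjoint_right.mpr (disjoint_iff.mpr h)).trans le_sup_right
    · have hwu : w ≤ u := hu ▸ le_sSup hwF
      have hsub := hcomp.2.2.2.2 (oSub w) (isSublocale_oSub w)
        (oSub_subset_iff.mpr hwu) (subConnected_oSub (hF w hwF)) (meets_oSub h)
      exact (oSub_subset_iff.mp hsub).trans le_sup_left
end
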